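/- arXiv:2406.18766 — 7 statements merged into one kernel-verified Lean document; each statement's English description precedes it below -/
import Mathlib

section
/- Let h > 0 be a real number, λ a nonzero real number, and f : ℝ → ℝ. Define y_p : ℝ → ℝ by y_p(t) = ∑_{s=1}^{⌊t/h⌋} λ^{s-1} f(t − s·h). Then for every real t ≥ 0, y_p(t+h) − λ·y_p(t) = f(t); that is, y_p is a particular solution of y(t+h) − λ y(t) = f(t) on [0,∞). -/
/-! Since `⌊(t + h) / h⌋ = ⌊t / h⌋ + 1`, splitting off the term `s = 1` of the sum for `t + h`
and shifting the index `s ↦ s + 1` in the rest leaves `f t` plus `λ` times the sum for `t`. -/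

open Finset

lemma sum_Icc_zpow_sub_one_mul_succ {K : Type*} [DivisionRing K] (lam : K) (g : ℤ → K) {n : ℤ}
    (hn : 0 ≤ n) :
    ∑ s ∈ Icc 1 (n + 1), lam ^ (s - 1) * g s =
      g 1 + lam * ∑ s ∈ Icc 1 n, lam ^ (s - 1) * g (s + 1) := by
  have hsplit : Icc 1 (n + 1) = insert 1 ((Icc 1 n).map (addRightEmbedding 1)) := by
    rw [map_add_right_Icc]
    ext x
    simp only [mem_Icc, mem_insert]
    omega
  rw [hsplit, sum_insert (by simp), sum_map, mul_sum, sub_self, zpow_zero, one_mul]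
  congr 1
  refine sum_congr rfl fun s hs => ?_
  have hs1 : 1 ≤ s := (mem_Icc.1 hs).1
  rw [addRightEmbedding_apply, add_sub_cancel_right, ← mul_assoc]
  congr 1
  -- `zpow_add'` only requires the exponent `1 + (s - 1)` to be nonzero.
  calc lam ^ s = lam ^ (1 + (s - 1)) := by rw [add_sub_cancel]
    _ = lam * lam ^ (s - 1) := by rw [zpow_add' (Or.inr (Or.inl (by omega))), zpow_one]

theorem stmt_12_general (h : ℝ) (hh : 0 < h) (lam : ℝ) (f : ℝ → ℝ)
    (yp : ℝ → ℝ)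
    (hyp : ∀ t : ℝ, yp t =
      ∑ s ∈ Finset.Icc (1 : ℤ) ⌊t / h⌋, lam ^ (s - 1) * f (t - (s : ℝ) * h)) :
    ∀ t : ℝ, 0 ≤ t → yp (t + h) - lam * yp t = f t := by
  intro t ht
  have hfloor : ⌊(t + h) / h⌋ = ⌊t / h⌋ + 1 := by
    rw [add_div, div_self hh.ne', Int.floor_add_one]
  rw [hyp, hyp, hfloor,
    sum_Icc_zpow_sub_one_mul_succ _ _ (Int.floor_nonneg.2 (div_nonneg ht hh.le))]
  push_cast
  simp only [add_sub_cancel_right, one_mul, add_mul, add_sub_add_right_eq_sub]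

/-- The function `y_p(t) = ∑_{s=1}^{⌊t/h⌋} λ^{s-1} f(t - s·h)` is a particular solution of
`y(t+h) - λ y(t) = f(t)` on `[0,∞)`. -/
theorem stmt_12 (h : ℝ) (hh : 0 < h) (lam : ℝ) (hlam : lam ≠ 0) (f : ℝ → ℝ)
    (yp : ℝ → ℝ)
    (hyp : ∀ t : ℝ, yp t =
      ∑ s ∈ Finset.Icc (1 : ℤ) ⌊t / h⌋, lam ^ (s - 1) * f (t - (s : ℝ) * h)) :
    ∀ t : ℝ, 0 ≤ t → yp (t + h) - lam * yp t = f t :=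
  stmt_12_general h hh lam f yp hyp
end

section
/- Let h > 0 and λ > 0 be real numbers, let μ : ℝ → ℝ be periodic with period h (μ(x+h) = μ(x) for all x), and let p : ℝ → ℝ be nonnegative (p(x) ≥ 0 for all x). Define y : ℝ → ℝ by y(t) = λ^{t/h}·μ(t) + ∑_{s=1}^{⌊t/h⌋} λ^{s-1} p(t − s·h). Then y satisfies the difference inequality y(t+h) − λ·y(t) ≥ 0 for all real t ≥ 0. -/
/-- For `h > 0`, `λ > 0`, `μ` an `h`-periodic function and `p` nonnegative, the function
`y(t) = λ^{t/h}·μ(t) + ∑_{s=1}^{⌊t/h⌋} λ^{s-1} p(t - s·h)` satisfies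
`y(t+h) - λ·y(t) ≥ 0` for all `t ≥ 0`. -/
theorem stmt_13 (h lam : ℝ) (hh : 0 < h) (hlam : 0 < lam)
    (μ : ℝ → ℝ) (hμ : ∀ x : ℝ, μ (x + h) = μ x)
    (p : ℝ → ℝ) (hp : ∀ x : ℝ, 0 ≤ p x)
    (y : ℝ → ℝ)
    (hy : ∀ t : ℝ, y t = lam ^ (t / h) * μ t +
      ∑ s ∈ Finset.Icc (1 : ℤ) ⌊t / h⌋, lam ^ (s - 1) * p (t - (s : ℝ) * h)) :
    ∀ t : ℝ, 0 ≤ t → 0 ≤ y (t + h) - lam * y t := by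
  intro t ht
  have hne : h ≠ 0 := hh.ne'
  have hlne : lam ≠ 0 := hlam.ne'
  have hdiv : (t + h) / h = t / h + 1 := by field_simp
  have hfloor : ⌊(t + h) / h⌋ = ⌊t / h⌋ + 1 := by rw [hdiv, Int.floor_add_one]
  set N := ⌊t / h⌋ with hN
  have hN0 : 0 ≤ N := Int.floor_nonneg.2 (div_nonneg ht hh.le)
  have hset : Finset.Icc (1 : ℤ) (N + 1) = insert 1 (Finset.Icc 2 (N + 1)) := by
    ext s; simp only [Finset.mem_Icc, Finset.mem_insert]; omega
  have hsum : ∑ s ∈ Finset.Icc (1 : ℤ) (N + 1), lam ^ (s - 1) * p (t + h - (s : ℝ) * h)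
      = p t + lam * ∑ s ∈ Finset.Icc (1 : ℤ) N, lam ^ (s - 1) * p (t - (s : ℝ) * h) := by
    rw [hset, Finset.sum_insert (by simp)]
    congr 1
    · norm_num
    · rw [show Finset.Icc (2 : ℤ) (N + 1) =
          (Finset.Icc (1 : ℤ) N).map (addRightEmbedding 1) by
            rw [Finset.map_add_right_Icc]; norm_num,
        Finset.sum_map, Finset.mul_sum]
      apply Finset.sum_congr rfl
      intro s hs
      simp only [addRightEmbedding_apply]
      have h1 : lam ^ (s + 1 - 1) = lam * lam ^ (s - 1) := by
        rw [show s + 1 - 1 = (s - 1) + 1 by ring, zpow_add_one₀ hlne]; ring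
      have h2 : t + h - ((s + 1 : ℤ) : ℝ) * h = t - (s : ℝ) * h := by push_cast; ring
      rw [h1, h2]; ring
  have key : y (t + h) - lam * y t = p t := by
    rw [hy, hy, hμ, hfloor, hsum, hdiv, Real.rpow_add hlam, Real.rpow_one]; ring
  rw [key]; exact hp t
end

section
/- Let h > 0 and λ < 0 be real numbers, let μ : ℝ → ℝ be antiperiodic with antiperiod h (μ(x+h) = −μ(x) for all x), and let p : ℝ → ℝ be nonnegative (p(x) ≥ 0 for all x). Define y : ℝ → ℝ by y(t) = |λ|^{t/h}·μ(t) + ∑_{s=1}^{⌊t/h⌋} λ^{s-1} p(t − s·h). Then y satisfies the difference inequality y(t+h) − λ·y(t) ≥ 0 for all real t ≥ 0. -/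
/-- For `h > 0`, `λ < 0`, `μ` an `h`-antiperiodic function and `p` nonnegative, the function
`y(t) = |λ|^{t/h}·μ(t) + ∑_{s=1}^{⌊t/h⌋} λ^{s-1} p(t - s·h)` satisfies
`y(t+h) - λ·y(t) ≥ 0` for all `t ≥ 0`. -/
theorem stmt_14 (h lam : ℝ) (hh : 0 < h) (hlam : lam < 0)
    (μ : ℝ → ℝ) (hμ : ∀ x : ℝ, μ (x + h) = -μ x)
    (p : ℝ → ℝ) (hp : ∀ x : ℝ, 0 ≤ p x)
    (y : ℝ → ℝ)
    (hy : ∀ t : ℝ, y t = |lam| ^ (t / h) * μ t +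
      ∑ s ∈ Finset.Icc (1 : ℤ) ⌊t / h⌋, lam ^ (s - 1) * p (t - (s : ℝ) * h)) :
    ∀ t : ℝ, 0 ≤ t → 0 ≤ y (t + h) - lam * y t := by
  intro t ht
  have hl0 : lam ≠ 0 := ne_of_lt hlam
  have hh0 : h ≠ 0 := ne_of_gt hh
  set N := ⌊t / h⌋ with hN
  have hN0 : 0 ≤ N := Int.floor_nonneg.mpr (div_nonneg ht hh.le)
  have hfloor : ⌊(t + h) / h⌋ = N + 1 := by
    rw [add_div, div_self hh0, Int.floor_add_one]
  have habs : |lam| ^ ((t + h) / h) = |lam| ^ (t / h) * |lam| := by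
    rw [add_div, div_self hh0, Real.rpow_add_one (abs_ne_zero.mpr hl0)]
  have hsum : ∑ s ∈ Finset.Icc (1 : ℤ) (N + 1), lam ^ (s - 1) * p (t + h - (s : ℝ) * h)
      = ∑ s ∈ Finset.Icc (0 : ℤ) N, lam ^ s * p (t - (s : ℝ) * h) := by
    rw [show Finset.Icc (1 : ℤ) (N + 1) = (Finset.Icc (0 : ℤ) N).map (addRightEmbedding 1) by
        rw [Finset.map_add_right_Icc]; norm_num, Finset.sum_map]
    refine Finset.sum_congr rfl fun s _ => ?_
    rw [addRightEmbedding_apply, show s + 1 - 1 = s from by ring]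
    congr 1
    push_cast
    ring_nf
  have hIcc : Finset.Icc (0 : ℤ) N = insert 0 (Finset.Icc 1 N) := by
    ext x
    simp only [Finset.mem_Icc, Finset.mem_insert]
    omega
  have hz : ∀ s ∈ Finset.Icc (1:ℤ) N, lam * (lam ^ (s-1) * p (t - (s:ℝ)*h))
      = lam ^ s * p (t - (s:ℝ)*h) := by
    intro s _
    rw [← mul_assoc, mul_comm lam, ← zpow_add_one₀ hl0, sub_add_cancel]
  have key : y (t + h) - lam * y t = p t := by
    rw [hy, hy, hfloor, habs, hμ, hsum, hIcc,
      Finset.sum_insert (by simp), mul_add, Finset.mul_sum,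
      Finset.sum_congr rfl hz, abs_of_neg hlam]
    simp only [zpow_zero, Int.cast_zero, zero_mul, sub_zero, one_mul]
    ring
  rw [key]
  exact hp t
end

section
/- Let h > 0 and λ > 0 be real numbers, let μ : ℝ → ℝ be periodic with period h (μ(x+h) = μ(x) for all x), and let q : ℝ → ℝ be nonpositive (q(x) ≤ 0 for all x). Define y : ℝ → ℝ by y(t) = λ^{t/h}·μ(t) + ∑_{s=1}^{⌊t/h⌋} λ^{s-1} q(t − s·h). Then y satisfies the difference inequality y(t+h) − λ·y(t) ≤ 0 for all real t ≥ 0. -/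
/-- For `h > 0`, `λ > 0`, `μ` an `h`-periodic function and `q` nonpositive, the function
`y(t) = λ^{t/h}·μ(t) + ∑_{s=1}^{⌊t/h⌋} λ^{s-1} q(t - s·h)` satisfies
`y(t+h) - λ·y(t) ≤ 0` for all `t ≥ 0`. -/
theorem stmt_15 (h lam : ℝ) (hh : 0 < h) (hlam : 0 < lam)
    (μ : ℝ → ℝ) (hμ : ∀ x : ℝ, μ (x + h) = μ x)
    (q : ℝ → ℝ) (hq : ∀ x : ℝ, q x ≤ 0)
    (y : ℝ → ℝ)
    (hy : ∀ t : ℝ, y t = lam ^ (t / h) * μ t +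
      ∑ s ∈ Finset.Icc (1 : ℤ) ⌊t / h⌋, lam ^ (s - 1) * q (t - (s : ℝ) * h)) :
    ∀ t : ℝ, 0 ≤ t → y (t + h) - lam * y t ≤ 0 := by
  intro t ht
  have hN : (0 : ℤ) ≤ ⌊t / h⌋ := Int.floor_nonneg.mpr (div_nonneg ht hh.le)
  set N := ⌊t / h⌋ with hNdef
  have h1 : (t + h) / h = t / h + 1 := by field_simp
  have h2 : ⌊(t + h) / h⌋ = N + 1 := by rw [h1, Int.floor_add_one]
  rw [hy, hy, h2, hμ, h1, Real.rpow_add hlam, Real.rpow_one]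
  have hmap : Finset.Icc (1 : ℤ) (N + 1) = (Finset.Icc (0 : ℤ) N).map (addRightEmbedding 1) := by
    rw [Finset.map_add_right_Icc]; norm_num
  have hsum : ∑ s ∈ Finset.Icc (1 : ℤ) (N + 1), lam ^ (s - 1) * q (t + h - (s : ℝ) * h)
      = q t + lam * ∑ s ∈ Finset.Icc (1 : ℤ) N, lam ^ (s - 1) * q (t - (s : ℝ) * h) := by
    rw [hmap, Finset.sum_map]
    have h0 : Finset.Icc (0 : ℤ) N = insert 0 (Finset.Icc 1 N) := by
      ext x; simp only [Finset.mem_Icc, Finset.mem_insert]; omega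
    rw [h0, Finset.sum_insert (by simp)]
    simp only [addRightEmbedding_apply]
    congr 1
    · norm_num
    · rw [Finset.mul_sum]
      apply Finset.sum_congr rfl
      intro s hs
      have : lam ^ (s + 1 - 1) = lam * lam ^ (s - 1) := by
        rw [show s + 1 - 1 = 1 + (s - 1) by ring, zpow_add₀ hlam.ne', zpow_one]
      rw [this]
      have harg : t + h - ((s : ℤ) + 1 : ℤ) * h = t - (s : ℝ) * h := by push_cast; ring
      rw [harg]
      ring
  rw [show ⌊t / h⌋ = N from hNdef.symm, hsum]
  linarith [hq t]
end

section
/- Let h > 0 and λ < 0 be real numbers, let μ : ℝ → ℝ be antiperiodic with antiperiod h (μ(x+h) = −μ(x) for all x), and let q : ℝ → ℝ be nonpositive (q(x) ≤ 0 for all x). Define y : ℝ → ℝ by y(t) = |λ|^{t/h}·μ(t) + ∑_{s=1}^{⌊t/h⌋} λ^{s-1} q(t − s·h). Then y satisfies the difference inequality y(t+h) − λ·y(t) ≤ 0 for all real t ≥ 0. -/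
/-- For `h > 0`, `λ < 0`, `μ` an `h`-antiperiodic function and `q` nonpositive, the function
`y(t) = |λ|^{t/h}·μ(t) + ∑_{s=1}^{⌊t/h⌋} λ^{s-1} q(t - s·h)` satisfies
`y(t+h) - λ·y(t) ≤ 0` for all `t ≥ 0`. -/
theorem stmt_16 (h lam : ℝ) (hh : 0 < h) (hlam : lam < 0)
    (μ : ℝ → ℝ) (hμ : ∀ x : ℝ, μ (x + h) = -μ x)
    (q : ℝ → ℝ) (hq : ∀ x : ℝ, q x ≤ 0)
    (y : ℝ → ℝ)
    (hy : ∀ t : ℝ, y t = |lam| ^ (t / h) * μ t +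
      ∑ s ∈ Finset.Icc (1 : ℤ) ⌊t / h⌋, lam ^ (s - 1) * q (t - (s : ℝ) * h)) :
    ∀ t : ℝ, 0 ≤ t → y (t + h) - lam * y t ≤ 0 := by
  intro t ht
  have hl0 : lam ≠ 0 := ne_of_lt hlam
  have habs : |lam| = -lam := abs_of_neg hlam
  have hn : (0 : ℤ) ≤ ⌊t / h⌋ := Int.floor_nonneg.mpr (div_nonneg ht hh.le)
  set n := ⌊t / h⌋ with hndef
  have hfloor : ⌊(t + h) / h⌋ = n + 1 := by
    rw [add_div, div_self hh.ne', Int.floor_add_one, hndef]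
  have hpow : |lam| ^ ((t + h) / h) = |lam| ^ (t / h) * (-lam) := by
    rw [add_div, div_self hh.ne',
      Real.rpow_add_one (abs_ne_zero.mpr hl0), habs]
  -- reindex the shifted sum
  have hmap := Finset.sum_map (Finset.Icc (0 : ℤ) n) (addRightEmbedding 1)
      (fun s : ℤ => lam ^ (s - 1) * q (t + h - (s : ℝ) * h))
  rw [Finset.map_add_right_Icc, zero_add] at hmap
  have hsum1 : ∑ s ∈ Finset.Icc (1 : ℤ) (n + 1), lam ^ (s - 1) * q (t + h - (s : ℝ) * h)
      = ∑ s ∈ Finset.Icc (0 : ℤ) n, lam ^ s * q (t - (s : ℝ) * h) := by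
    rw [hmap]
    refine Finset.sum_congr rfl fun s _ => ?_
    have : (addRightEmbedding 1 : ℤ ↪ ℤ) s = s + 1 := rfl
    rw [this]
    have h1 : s + 1 - 1 = s := by ring
    have h2 : t + h - ((s : ℤ) + 1 : ℤ) * h = t - (s : ℝ) * h := by push_cast; ring
    rw [h1, h2]
  -- split off s = 0
  have hins : Finset.Icc (0 : ℤ) n = insert 0 (Finset.Icc (1 : ℤ) n) := by
    ext x
    simp only [Finset.mem_Icc, Finset.mem_insert]
    omega
  have hsum2 : ∑ s ∈ Finset.Icc (0 : ℤ) n, lam ^ s * q (t - (s : ℝ) * h)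
      = q t + ∑ s ∈ Finset.Icc (1 : ℤ) n, lam ^ s * q (t - (s : ℝ) * h) := by
    rw [hins, Finset.sum_insert (by simp)]
    norm_num
  have hlamsum : lam * ∑ s ∈ Finset.Icc (1 : ℤ) n, lam ^ (s - 1) * q (t - (s : ℝ) * h)
      = ∑ s ∈ Finset.Icc (1 : ℤ) n, lam ^ s * q (t - (s : ℝ) * h) := by
    rw [Finset.mul_sum]
    refine Finset.sum_congr rfl fun s _ => ?_
    rw [← mul_assoc]
    congr 1
    rw [mul_comm, ← zpow_add_one₀ hl0, sub_add_cancel]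
  have key : y (t + h) - lam * y t = q t := by
    rw [hy (t + h), hy t, hfloor, hpow, hμ, hsum1, hsum2, mul_add, hlamsum]
    ring
  rw [key]
  exact hq t
end

section
/- For every function f : ℝ → ℝ and every real t ≥ 0, ∑_{s₂=1}^{⌊t⌋} ∑_{s₁=1}^{⌊t⌋−s₂} (−1)^{s₁}·i^{s₁+s₂}·f(t − s₁ − s₂) = ∑_{s=1}^{⌊t/2⌋} (−1)^{s−1}·f(t − 2s), as an identity of complex numbers (the real values f(·) being regarded as complex numbers and i denoting the imaginary unit). (Both sides arise as particular solutions of y(t+2) + y(t) = f(t), obtained respectively by factoring E² + I = (E − iI)(E + iI) and by taking shift h = 2 with λ = −1.) -/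
/-!
Write `k = s₁ + s₂`. The coefficient of `i^k f(t - k)` on the left is `∑_{s₁=1}^{k-1} (-1)^{s₁}`,
which is `-1` for even `k` and `0` for odd `k`; with `i^{2s} = (-1)^s` only the terms `k = 2s`
survive, each with sign `(-1)^{s-1}`. Inductively in `⌊t⌋`, each step adds the diagonal
`s₁ + s₂ = n + 1`, whose coefficient is that alternating sum.
-/

open Finset

theorem Finset.sum_Icc_one_natCast {M : Type*} [AddCommMonoid M] (F : ℤ → M) (n : ℕ) :
    ∑ s ∈ Icc (1 : ℤ) n, F s = ∑ s ∈ Icc 1 n, F s := by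
  refine sum_nbij' Int.toNat (↑) ?_ ?_ ?_ ?_ ?_ <;> intro s hs <;> simp only [mem_Icc] at hs ⊢
  all_goals first | omega | congr; omega

theorem sum_Icc_neg_one_pow_sub {R : Type*} [Ring R] (n : ℕ) :
    ∑ j ∈ Icc 1 n, (-1 : R) ^ (n + 1 - j) = -if Even n then 0 else 1 := by
  rw [← neg_one_geom_sum, ← sum_neg_distrib]
  refine sum_nbij' (n - ·) (n - ·) ?_ ?_ ?_ ?_ ?_ <;> intro j hj <;>
    simp only [mem_Icc, mem_range] at hj ⊢
  all_goals try omega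
  rw [show n + 1 - j = n - j + 1 by omega, pow_succ, mul_neg_one]

theorem sum_Icc_sum_Icc_neg_one_pow_mul {R : Type*} [Ring R] (h : ℕ → R) (n : ℕ) :
    ∑ j ∈ Icc 1 n, ∑ i ∈ Icc 1 (n - j), (-1 : R) ^ i * h (i + j) =
      -∑ s ∈ Icc 1 (n / 2), h (2 * s) := by
  induction n with
  | zero => simp
  | succ n ih =>
    have peel : ∀ j ∈ Icc 1 n, ∑ i ∈ Icc 1 (n + 1 - j), (-1 : R) ^ i * h (i + j) =
        ∑ i ∈ Icc 1 (n - j), (-1 : R) ^ i * h (i + j) + (-1 : R) ^ (n + 1 - j) * h (n + 1) := by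
      intro j hj
      rw [mem_Icc] at hj
      rw [show n + 1 - j = n - j + 1 by omega, sum_Icc_succ_top (by omega),
        show n - j + 1 + j = n + 1 by omega]
    rw [sum_Icc_succ_top (by omega), Nat.sub_self, Icc_eq_empty_of_lt zero_lt_one, sum_empty,
      add_zero, sum_congr rfl peel, sum_add_distrib, ← sum_mul, sum_Icc_neg_one_pow_sub, ih]
    rcases Nat.even_or_odd n with ⟨m, rfl⟩ | ⟨m, rfl⟩
    · rw [if_pos (Even.add_self m), neg_zero, zero_mul, add_zero,
        show (m + m + 1) / 2 = (m + m) / 2 by omega]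
    · rw [show (2 * m + 1 + 1) / 2 = (2 * m + 1) / 2 + 1 by omega, sum_Icc_succ_top (by omega),
        show 2 * ((2 * m + 1) / 2 + 1) = 2 * m + 1 + 1 by omega,
        if_neg (Nat.not_even_two_mul_add_one m), neg_mul, one_mul, neg_add]

/-- For every `f : ℝ → ℝ` and `t ≥ 0`, as an identity of complex numbers,
`∑_{s₂=1}^{⌊t⌋} ∑_{s₁=1}^{⌊t⌋-s₂} (-1)^{s₁}·i^{s₁+s₂}·f(t-s₁-s₂)
  = ∑_{s=1}^{⌊t/2⌋} (-1)^{s-1}·f(t-2s)`. -/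
theorem stmt_18 (f : ℝ → ℝ) :
    ∀ t : ℝ, 0 ≤ t →
      ∑ s₂ ∈ Finset.Icc (1 : ℤ) ⌊t⌋, ∑ s₁ ∈ Finset.Icc (1 : ℤ) (⌊t⌋ - s₂),
          (-1 : ℂ) ^ s₁ * Complex.I ^ (s₁ + s₂) * (f (t - (s₁ : ℝ) - (s₂ : ℝ)) : ℂ) =
        ∑ s ∈ Finset.Icc (1 : ℤ) ⌊t / 2⌋,
          (-1 : ℂ) ^ (s - 1) * (f (t - 2 * (s : ℝ)) : ℂ) := by
  intro t ht
  obtain ⟨n, hn⟩ : ∃ n : ℕ, ⌊t⌋ = n := Int.eq_ofNat_of_zero_le (Int.floor_nonneg.2 ht)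
  have hhalf : ⌊t / 2⌋ = ((n / 2 : ℕ) : ℤ) := by
    rw [show t / 2 = t / (2 : ℕ) by norm_num, Int.floor_div_natCast, hn]
    omega
  rw [hn, hhalf, sum_Icc_one_natCast, sum_Icc_one_natCast]
  convert sum_Icc_sum_Icc_neg_one_pow_mul (fun k ↦ Complex.I ^ k * (f (t - k) : ℂ)) n using 1
  · refine sum_congr rfl fun j hj ↦ ?_
    rw [show (n : ℤ) - j = ((n - j : ℕ) : ℤ) by rw [mem_Icc] at hj; omega, sum_Icc_one_natCast]
    refine sum_congr rfl fun i _ ↦ ?_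
    push_cast
    rw [zpow_natCast, ← Nat.cast_add, zpow_natCast, mul_assoc, sub_sub]
  · rw [← sum_neg_distrib]
    refine sum_congr rfl fun s _ ↦ ?_
    rw [zpow_sub_one₀ (by norm_num), zpow_natCast, pow_mul, Complex.I_sq]
    push_cast
    ring
end

section
/- Let n ≥ 1 and let (h₁,λ₁),…,(hₙ,λₙ) be pairs of real numbers with hᵢ > 0 and λᵢ ≠ 0 for each i. For h > 0 and λ ≠ 0 define the indefinite-summation operator A_{h,λ} on functions g : ℝ → ℝ by (A_{h,λ} g)(t) = ∑_{s=1}^{⌊t/h⌋} λ^{s−1} g(t − s·h) (empty sum when ⌊t/h⌋ ≤ 0), and the difference operator D_{h,λ} by (D_{h,λ} g)(t) = g(t+h) − λ·g(t). Given f : ℝ → ℝ, define y_p = (A_{h₁,λ₁} ∘ A_{h₂,λ₂} ∘ ⋯ ∘ A_{hₙ,λₙ}) f. Then for every real t ≥ 0, (D_{hₙ,λₙ} ∘ ⋯ ∘ D_{h₂,λ₂} ∘ D_{h₁,λ₁}) y_p (t) = f(t); that is, y_p is a particular solution on [0,∞) of the difference equation Φ(E) y = f with Φ(E) = ∏_{i=1}^{n}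 (E^{hᵢ} − λᵢ I). -/
/-- The indefinite-summation operator `A_{h,λ}`:
`(A_{h,λ} g)(t) = ∑_{s=1}^{⌊t/h⌋} λ^{s-1} g(t - s·h)` (empty sum when `⌊t/h⌋ ≤ 0`). -/
noncomputable def sumOp (h lam : ℝ) (g : ℝ → ℝ) : ℝ → ℝ :=
  fun t => ∑ s ∈ Finset.Icc (1 : ℤ) ⌊t / h⌋, lam ^ (s - 1) * g (t - (s : ℝ) * h)

/-- The difference operator `D_{h,λ}`: `(D_{h,λ} g)(t) = g(t+h) - λ·g(t)`. -/
def diffOp (h lam : ℝ) (g : ℝ → ℝ) : ℝ → ℝ :=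
  fun t => g (t + h) - lam * g t

/-!
On `[0, ∞)` the summation operator is a right inverse of the difference operator: re-indexing
the sum over `s` gives the recursion `A_{h,λ} g (t + h) = g t + λ · A_{h,λ} g t` for `t ≥ 0`,
i.e. `D_{h,λ} (A_{h,λ} g) = g` there. Each `D_{h,λ}` with `h ≥ 0` only looks at values on
`[0, ∞)` when evaluated there, so the innermost pair `D_{h₁,λ₁} A_{h₁,λ₁}` cancels first and
induction on the list removes the remaining pairs.
-/

open Set

theorem Int.sum_Icc_one_eq_sum_range {M : Type*} [AddCommMonoid M] (m : ℤ) (F : ℤ → M) :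
    ∑ s ∈ Finset.Icc 1 m, F s = ∑ k ∈ Finset.range m.toNat, F (k + 1) := by
  rw [Int.Icc_eq_finset_map, Finset.sum_map, add_sub_cancel_right]
  exact Finset.sum_congr rfl fun k _ => by simp [add_comm]

theorem sumOp_eq_sum_range (h lam : ℝ) (g : ℝ → ℝ) (t : ℝ) :
    sumOp h lam g t = ∑ k ∈ Finset.range ⌊t / h⌋₊, lam ^ k * g (t - (k + 1) * h) := by
  rw [sumOp, Int.sum_Icc_one_eq_sum_range, Int.floor_toNat]
  refine Finset.sum_congr rfl fun k _ => ?_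
  push_cast
  rw [add_sub_cancel_right, zpow_natCast]

theorem sumOp_add_self {h : ℝ} (lam : ℝ) (g : ℝ → ℝ) {t : ℝ} (hh : 0 < h) (ht : 0 ≤ t) :
    sumOp h lam g (t + h) = g t + lam * sumOp h lam g t := by
  have hfloor : ⌊(t + h) / h⌋₊ = ⌊t / h⌋₊ + 1 := by
    rw [add_div, div_self hh.ne', Nat.floor_add_one (div_nonneg ht hh.le)]
  rw [sumOp_eq_sum_range, sumOp_eq_sum_range, hfloor, Finset.sum_range_succ', Finset.mul_sum,
    add_comm]
  congr 1
  · simp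
  · refine Finset.sum_congr rfl fun k _ => ?_
    push_cast
    ring_nf

theorem diffOp_sumOp {h : ℝ} (lam : ℝ) (g : ℝ → ℝ) (hh : 0 < h) :
    EqOn (diffOp h lam (sumOp h lam g)) g (Ici 0) := fun t ht => by
  rw [diffOp, sumOp_add_self lam g hh ht, add_sub_cancel_right]

theorem diffOp_congr {h : ℝ} (lam : ℝ) {g₁ g₂ : ℝ → ℝ} (hh : 0 ≤ h) (hg : EqOn g₁ g₂ (Ici 0)) :
    EqOn (diffOp h lam g₁) (diffOp h lam g₂) (Ici 0) := fun t (ht : 0 ≤ t) => by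
  rw [diffOp, diffOp, hg ht, hg (show 0 ≤ t + h by linarith)]

theorem foldl_diffOp_congr {L : List (ℝ × ℝ)} (hL : ∀ p ∈ L, 0 ≤ p.1) {g₁ g₂ : ℝ → ℝ}
    (hg : EqOn g₁ g₂ (Ici 0)) :
    EqOn (L.foldl (fun g p => diffOp p.1 p.2 g) g₁) (L.foldl (fun g p => diffOp p.1 p.2 g) g₂)
      (Ici 0) := by
  induction L generalizing g₁ g₂ with
  | nil => exact hg
  | cons p L ih =>
    exact ih (fun q hq => hL q (List.mem_cons_of_mem _ hq))
      (diffOp_congr p.2 (hL p List.mem_cons_self) hg)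

theorem foldl_diffOp_foldr_sumOp {L : List (ℝ × ℝ)} (hL : ∀ p ∈ L, 0 < p.1) (f : ℝ → ℝ) :
    EqOn (L.foldl (fun g p => diffOp p.1 p.2 g) (L.foldr (fun p g => sumOp p.1 p.2 g) f)) f
      (Ici 0) := by
  induction L with
  | nil => exact eqOn_refl _ _
  | cons p L ih =>
    have hL' : ∀ q ∈ L, 0 < q.1 := fun q hq => hL q (List.mem_cons_of_mem _ hq)
    exact (foldl_diffOp_congr (fun q hq => (hL' q hq).le)
      (diffOp_sumOp p.2 _ (hL p List.mem_cons_self))).trans (ih hL')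

theorem stmt_19_general (L : List (ℝ × ℝ))
    (hpos : ∀ p ∈ L, 0 < p.1)
    (f : ℝ → ℝ)
    (yp : ℝ → ℝ) (hyp : yp = L.foldr (fun p g => sumOp p.1 p.2 g) f) :
    ∀ t : ℝ, 0 ≤ t → L.foldl (fun g p => diffOp p.1 p.2 g) yp t = f t := by
  subst hyp
  exact fun t ht => foldl_diffOp_foldr_sumOp hpos f ht

/-- For pairs `(h₁,λ₁),…,(hₙ,λₙ)` (given as a nonempty list `L`, `n ≥ 1`) with `hᵢ > 0` and
`λᵢ ≠ 0`, the function `y_p = (A_{h₁,λ₁} ∘ ⋯ ∘ A_{hₙ,λₙ}) f` satisfies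
`(D_{hₙ,λₙ} ∘ ⋯ ∘ D_{h₁,λ₁}) y_p (t) = f(t)` for every `t ≥ 0`; `D_{h₁,λ₁}` is applied
first, matching `Φ(E) = ∏ᵢ (E^{hᵢ} - λᵢ I)`. -/
theorem stmt_19 (L : List (ℝ × ℝ)) (hL : L ≠ [])
    (hpos : ∀ p ∈ L, 0 < p.1) (hne : ∀ p ∈ L, p.2 ≠ 0)
    (f : ℝ → ℝ)
    (yp : ℝ → ℝ) (hyp : yp = L.foldr (fun p g => sumOp p.1 p.2 g) f) :
    ∀ t : ℝ, 0 ≤ t → L.foldl (fun g p => diffOp p.1 p.2 g) yp t = f t :=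
  stmt_19_general L hpos f yp hyp
end
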